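/- Let E be a simplicial commutative k-algebra whose Moore complex satisfies NE_4 = 0. Then for all x_3, y_3 ∈ NE_3 the following identity holds in E_3: (s_1 d_3 x_3 − s_2 d_3 x_3 + x_3) · (s_2 d_3 y_3 − s_1 d_3 y_3 + s_0 d_3 y_3 − y_3) = 0. -/

import Mathlib

/-- A simplicial commutative `k`-algebra: a family of commutative `k`-algebras
`obj n` together with face algebra homomorphisms `d n i : obj (n+1) →ₐ[k] obj n`
(representing `d_i : E_{n+1} → E_n`, `0 ≤ i ≤ n+1`) and degeneracy algebra
homomorphisms `s n i : obj n →ₐ[k] obj (n+1)` (representing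
`s_i : E_n → E_{n+1}`, `0 ≤ i ≤ n`), satisfying the simplicial identities. -/
structure SimplicialCommAlg (k : Type*) [CommRing k]
    (obj : ℕ → Type*) [∀ n, CommRing (obj n)] [∀ n, Algebra k (obj n)] where
  d : (n : ℕ) → ℕ → (obj (n + 1) →ₐ[k] obj n)
  s : (n : ℕ) → ℕ → (obj n →ₐ[k] obj (n + 1))
  dd : ∀ (n i j : ℕ), i < j → j ≤ n + 2 →
    (d n i).comp (d (n + 1) j) = (d n (j - 1)).comp (d (n + 1) i)
  ds_lt : ∀ (m i j : ℕ), i < j → j ≤ m + 1 →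
    (d (m + 1) i).comp (s (m + 1) j) = (s m (j - 1)).comp (d m i)
  ds_self : ∀ (n j : ℕ), j ≤ n → (d n j).comp (s n j) = AlgHom.id k (obj n)
  ds_succ : ∀ (n j : ℕ), j ≤ n → (d n (j + 1)).comp (s n j) = AlgHom.id k (obj n)
  ds_gt : ∀ (m i j : ℕ), j + 1 < i → i ≤ m + 2 →
    (d (m + 1) i).comp (s (m + 1) j) = (s m j).comp (d m (i - 1))
  ss : ∀ (n i j : ℕ), i ≤ j → j ≤ n →
    (s (n + 1) i).comp (s n j) = (s (n + 1) (j + 1)).comp (s n i)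

/-!
For `x, y ∈ NE₃` put `F = s₁x - s₂x + s₃x` and `G = s₀y - s₁y + s₂y - s₃y` in `E₄`.
The face maps are ring homomorphisms, and `d₀, d₂, d₃` kill `F` while `d₁` kills `G`,
so `F * G ∈ NE₄ = 0`. Applying `d₄` to `F * G = 0` gives the identity, since
`d₄F = s₁d₃x - s₂d₃x + x` and `d₄G = s₀d₃y - s₁d₃y + s₂d₃y - y`.
-/

namespace SimplicialCommAlg

variable {k : Type*} [CommRing k] {obj : ℕ → Type*} [∀ n, CommRing (obj n)]
  [∀ n, Algebra k (obj n)] (E : SimplicialCommAlg k obj)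

theorem d_s_of_lt {m i j : ℕ} (hij : i < j) (hj : j ≤ m + 1) (z : obj (m + 1)) :
    E.d (m + 1) i (E.s (m + 1) j z) = E.s m (j - 1) (E.d m i z) :=
  DFunLike.congr_fun (E.ds_lt m i j hij hj) z

theorem d_s_self {n j : ℕ} (hj : j ≤ n) (z : obj n) : E.d n j (E.s n j z) = z :=
  DFunLike.congr_fun (E.ds_self n j hj) z

theorem d_succ_s {n j : ℕ} (hj : j ≤ n) (z : obj n) : E.d n (j + 1) (E.s n j z) = z :=
  DFunLike.congr_fun (E.ds_succ n j hj) z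

theorem d_s_of_gt {m i j : ℕ} (hij : j + 1 < i) (hi : i ≤ m + 2) (z : obj (m + 1)) :
    E.d (m + 1) i (E.s (m + 1) j z) = E.s m j (E.d m (i - 1) z) :=
  DFunLike.congr_fun (E.ds_gt m i j hij hi) z

def altDegenSum (y : obj 3) : obj 4 :=
  E.s 3 0 y - E.s 3 1 y + E.s 3 2 y - E.s 3 3 y

def altDegenTail (x : obj 3) : obj 4 :=
  E.s 3 1 x - E.s 3 2 x + E.s 3 3 x

theorem d_one_altDegenSum {y : obj 3} (hy : E.d 2 1 y = 0) :
    E.d 3 1 (E.altDegenSum y) = 0 := by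
  rw [altDegenSum, map_sub, map_add, map_sub, E.d_succ_s (n := 3) (j := 0) (by omega),
    E.d_s_self (by omega), E.d_s_of_lt (m := 2) (i := 1) (j := 2) (by omega) (by omega),
    E.d_s_of_lt (m := 2) (i := 1) (j := 3) (by omega) (by omega), hy]
  simp

theorem d_four_altDegenSum (y : obj 3) :
    E.d 3 4 (E.altDegenSum y) =
      E.s 2 0 (E.d 2 3 y) - E.s 2 1 (E.d 2 3 y) + E.s 2 2 (E.d 2 3 y) - y := by
  rw [altDegenSum, map_sub, map_add, map_sub,
    E.d_s_of_gt (m := 2) (i := 4) (j := 0) (by omega) (by omega),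
    E.d_s_of_gt (m := 2) (i := 4) (j := 1) (by omega) (by omega),
    E.d_s_of_gt (m := 2) (i := 4) (j := 2) (by omega) (by omega),
    E.d_succ_s (n := 3) (j := 3) (by omega)]

theorem d_zero_altDegenTail {x : obj 3} (hx : E.d 2 0 x = 0) :
    E.d 3 0 (E.altDegenTail x) = 0 := by
  rw [altDegenTail, map_add, map_sub,
    E.d_s_of_lt (m := 2) (i := 0) (j := 1) (by omega) (by omega),
    E.d_s_of_lt (m := 2) (i := 0) (j := 2) (by omega) (by omega),
    E.d_s_of_lt (m := 2) (i := 0) (j := 3) (by omega) (by omega), hx]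
  simp

theorem d_two_altDegenTail {x : obj 3} (hx : E.d 2 2 x = 0) :
    E.d 3 2 (E.altDegenTail x) = 0 := by
  rw [altDegenTail, map_add, map_sub, E.d_succ_s (n := 3) (j := 1) (by omega),
    E.d_s_self (by omega), E.d_s_of_lt (m := 2) (i := 2) (j := 3) (by omega) (by omega), hx]
  simp

theorem d_three_altDegenTail {x : obj 3} (hx : E.d 2 2 x = 0) :
    E.d 3 3 (E.altDegenTail x) = 0 := by
  rw [altDegenTail, map_add, map_sub,
    E.d_s_of_gt (m := 2) (i := 3) (j := 1) (by omega) (by omega),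
    E.d_succ_s (n := 3) (j := 2) (by omega), E.d_s_self (by omega), hx]
  simp

theorem d_four_altDegenTail (x : obj 3) :
    E.d 3 4 (E.altDegenTail x) = E.s 2 1 (E.d 2 3 x) - E.s 2 2 (E.d 2 3 x) + x := by
  rw [altDegenTail, map_add, map_sub,
    E.d_s_of_gt (m := 2) (i := 4) (j := 1) (by omega) (by omega),
    E.d_s_of_gt (m := 2) (i := 4) (j := 2) (by omega) (by omega),
    E.d_succ_s (n := 3) (j := 3) (by omega)]

end SimplicialCommAlg

open SimplicialCommAlg

theorem stmt_16 {k : Type*} [CommRing k] {obj : ℕ → Type*}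
    [∀ n, CommRing (obj n)] [∀ n, Algebra k (obj n)]
    (E : SimplicialCommAlg k obj)
    (hNE4 : ∀ w : obj 4, E.d 3 0 w = 0 → E.d 3 1 w = 0 →
      E.d 3 2 w = 0 → E.d 3 3 w = 0 → w = 0)
    (x3 : obj 3) (hx3 : E.d 2 0 x3 = 0 ∧ E.d 2 1 x3 = 0 ∧ E.d 2 2 x3 = 0) (y3 : obj 3) (hy3 : E.d 2 0 y3 = 0 ∧ E.d 2 1 y3 = 0 ∧ E.d 2 2 y3 = 0) :
    (E.s 2 1 (E.d 2 3 x3) - E.s 2 2 (E.d 2 3 x3) + x3) *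
      (E.s 2 2 (E.d 2 3 y3) - E.s 2 1 (E.d 2 3 y3) + E.s 2 0 (E.d 2 3 y3) - y3) = 0 := by
  obtain ⟨hx0, -, hx2⟩ := hx3
  obtain ⟨-, hy1, -⟩ := hy3
  have hprod : E.altDegenTail x3 * E.altDegenSum y3 = 0 :=
    hNE4 _ (by rw [map_mul, E.d_zero_altDegenTail hx0, zero_mul])
      (by rw [map_mul, E.d_one_altDegenSum hy1, mul_zero])
      (by rw [map_mul, E.d_two_altDegenTail hx2, zero_mul])
      (by rw [map_mul, E.d_three_altDegenTail hx2, zero_mul])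
  have hface := congrArg (E.d 3 4) hprod
  rw [map_mul, map_zero, d_four_altDegenTail, d_four_altDegenSum] at hface
  linear_combination hface
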